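/- For the alternative heterological predicate H'(P) ↔ ¬T(P,P), in minimal logic with the axiom scheme P(x) → T(P,x), both ¬H'(H') and ¬¬T(H',H') are derivable. -/
import Mathlib


/-- Propositional formulas built from variables and ⊥ using ∧, ∨, →. -/
inductive Fm : Type
  | var : ℕ → Fm
  | bot : Fm
  | and : Fm → Fm → Fm
  | or : Fm → Fm → Fm
  | imp : Fm → Fm → Fm
deriving DecidableEq

/-- ¬A is defined as A → ⊥. -/
def Fm.neg (A : Fm) : Fm := A.imp .bot

/-- Hilbert-style derivability in minimal propositional logic (intuitionistic
logic without ex falso quodlibet), extended by an extra set `Ax` of axioms. -/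
inductive Deriv (Ax : Fm → Prop) : Fm → Prop
  | ax {A} : Ax A → Deriv Ax A
  | k (A B : Fm) : Deriv Ax (A.imp (B.imp A))
  | s (A B C : Fm) : Deriv Ax ((A.imp (B.imp C)).imp ((A.imp B).imp (A.imp C)))
  | andI (A B : Fm) : Deriv Ax (A.imp (B.imp (A.and B)))
  | andE1 (A B : Fm) : Deriv Ax ((A.and B).imp A)
  | andE2 (A B : Fm) : Deriv Ax ((A.and B).imp B)
  | orI1 (A B : Fm) : Deriv Ax (A.imp (A.or B))
  | orI2 (A B : Fm) : Deriv Ax (B.imp (A.or B))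
  | orE (A B C : Fm) : Deriv Ax ((A.imp C).imp ((B.imp C).imp ((A.or B).imp C)))
  | mp {A B : Fm} : Deriv Ax (A.imp B) → Deriv Ax A → Deriv Ax B

/-- for the alternative heterological predicate
H'(P) ↔ ¬T(P,P), with the scheme P(x) → T(P,x), both ¬H'(H') and
¬¬T(H',H') are derivable. -/
theorem stmt10 (Pred : Type) (Ax : Fm → Prop)
    (app : Pred → Pred → Fm) (T2 : Pred → Pred → Fm)
    (h1 : ∀ (P x : Pred), Deriv Ax ((app P x).imp (T2 P x)))
    (H' : Pred)
    (hH1 : ∀ P : Pred, Deriv Ax ((app H' P).imp (T2 P P).neg))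
    (hH2 : ∀ P : Pred, Deriv Ax ((T2 P P).neg.imp (app H' P))) :
    Deriv Ax (app H' H').neg ∧ Deriv Ax (T2 H' H').neg.neg := by
  have negA : Deriv Ax (app H' H').neg :=
    Deriv.mp (Deriv.mp (Deriv.s (app H' H') (T2 H' H') .bot) (hH1 H')) (h1 H' H')
  refine ⟨negA, ?_⟩
  exact Deriv.mp (Deriv.mp (Deriv.s (T2 H' H').neg (app H' H') .bot)
    (Deriv.mp (Deriv.k ((app H' H').imp .bot) (T2 H' H').neg) negA)) (hH2 H')
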